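/- Under the triad constraints b_k^{1|yz} + b_k^{y|1z} + b_k^{z|1y} = 0 and the divergence-free property of the full vector field R (each R_i does not depend on x_i), the Gaussian density f(x) = Z⁻¹ exp(−β(x₁² + Σ_k(y_k² + z_k²))) is invariant for the additive model: div(R f) = 0. -/

import Mathlib

/-!
For `f = c · exp (-β |x|²)` the product rule gives `∂ᵢ (Rᵢ f) = f (∂ᵢ Rᵢ - 2β xᵢ Rᵢ)`. The first
term vanishes because `Rᵢ` does not depend on `xᵢ`, so `div (R f) = -2β f (x · R)`, and `x · R = 0`
is energy conservation: the bath conserves energy on its own, and the triad `(x₁, y_k, z_k)`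
contributes `λ (b1 k + bY k + bZ k) x₁ y_k z_k`, which the triad constraint kills.
-/

open Finset

/-- Index type for the additive model: the resolved variable `x₁` together with the bath
variables `y_1,…,y_Λ, z_1,…,z_Λ`. -/
abbrev AddIdx (Λ : ℕ) := Unit ⊕ Fin Λ ⊕ Fin Λ

section Gaussian

variable {ι : Type*} [Fintype ι]

theorem hasFDerivAt_sum_sq (x : ι → ℝ) :
    HasFDerivAt (fun y : ι → ℝ => ∑ j, y j ^ 2)
      (∑ j, (2 * x j) • ContinuousLinearMap.proj (R := ℝ) (φ := fun _ : ι => ℝ) j) x := by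
  refine HasFDerivAt.fun_sum fun j _ =>
    ((hasFDerivAt_apply (𝕜 := ℝ) j x).pow 2).congr_fderiv ?_
  norm_num [two_mul]

theorem fderiv_gaussian_apply_single [DecidableEq ι] (c β : ℝ) (x : ι → ℝ) (i : ι) :
    fderiv ℝ (fun y => c * Real.exp (-β * ∑ j, y j ^ 2)) x (Pi.single i 1)
      = c * Real.exp (-β * ∑ j, x j ^ 2) * (-(2 * β) * x i) := by
  rw [(((hasFDerivAt_sum_sq x).const_mul (-β)).exp.const_mul c).fderiv]
  simp only [neg_mul, neg_smul, smul_neg, neg_apply, smul_apply, _root_.sum_apply,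
    ContinuousLinearMap.proj_apply, Pi.single_apply, smul_eq_mul, mul_ite, mul_one, mul_zero,
    sum_ite_eq', mem_univ, ↓reduceIte, mul_neg, neg_inj]
  ring

theorem sum_fderiv_mul_gaussian_eq_zero [DecidableEq ι] {R : (ι → ℝ) → ι → ℝ} {c β : ℝ}
    {x : ι → ℝ}
    (hR : ∀ i, DifferentiableAt ℝ (fun y => R y i) x)
    (hdiv : ∀ i, fderiv ℝ (fun y => R y i) x (Pi.single i 1) = 0)
    (henergy : ∑ i, x i * R x i = 0) :
    ∑ i, fderiv ℝ (fun y => R y i * (c * Real.exp (-β * ∑ j, y j ^ 2))) x (Pi.single i 1)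
      = 0 := by
  have hf : Differentiable ℝ (fun y : ι → ℝ => c * Real.exp (-β * ∑ j, y j ^ 2)) := by
    fun_prop
  calc _ = ∑ i, c * Real.exp (-β * ∑ j, x j ^ 2) * (-(2 * β)) * (x i * R x i) := by
        refine sum_congr rfl fun i _ => ?_
        rw [fderiv_fun_mul (hR i) (hf x), add_apply, smul_apply, smul_apply, hdiv i,
          fderiv_gaussian_apply_single]
        simp only [smul_eq_mul]
        ring
    _ = 0 := by rw [← mul_sum, henergy, mul_zero]

end Gaussian

section AdditiveModel

variable {Λ : ℕ}

def additiveField (lam : ℝ) (b1 bY bZ : Fin Λ → ℝ) (By Bz : (AddIdx Λ → ℝ) → Fin Λ → ℝ)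
    (x : AddIdx Λ → ℝ) : AddIdx Λ → ℝ
  | .inl () => lam * ∑ k, b1 k * x (.inr (.inl k)) * x (.inr (.inr k))
  | .inr (.inl k) => By x k + lam * bY k * x (.inl ()) * x (.inr (.inr k))
  | .inr (.inr k) => Bz x k + lam * bZ k * x (.inl ()) * x (.inr (.inl k))

variable {lam : ℝ} {b1 bY bZ : Fin Λ → ℝ} {By Bz : (AddIdx Λ → ℝ) → Fin Λ → ℝ}

theorem eq_additiveField {R : (AddIdx Λ → ℝ) → AddIdx Λ → ℝ}
    (hR : ∀ x : AddIdx Λ → ℝ,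
      R x (.inl ()) = lam * ∑ k, b1 k * x (.inr (.inl k)) * x (.inr (.inr k))
      ∧ (∀ k, R x (.inr (.inl k)) = By x k + lam * bY k * x (.inl ()) * x (.inr (.inr k)))
      ∧ (∀ k, R x (.inr (.inr k)) = Bz x k + lam * bZ k * x (.inl ()) * x (.inr (.inl k)))) :
    R = additiveField lam b1 bY bZ By Bz := by
  ext x (⟨⟩ | k | k)
  exacts [(hR x).1, (hR x).2.1 k, (hR x).2.2 k]

theorem differentiable_additiveField_apply
    (hBd : ∀ k, Differentiable ℝ (fun x => By x k) ∧ Differentiable ℝ (fun x => Bz x k))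
    (i : AddIdx Λ) : Differentiable ℝ (fun x => additiveField lam b1 bY bZ By Bz x i) := by
  rcases i with ⟨⟩ | k | k
  · simp only [additiveField]
    fun_prop
  · have := (hBd k).1
    simp only [additiveField]
    fun_prop
  · have := (hBd k).2
    simp only [additiveField]
    fun_prop

theorem sum_mul_additiveField_eq_zero (htriad : ∀ k, b1 k + bY k + bZ k = 0)
    {x : AddIdx Λ → ℝ}
    (hbath : ∑ k, (x (.inr (.inl k)) * By x k + x (.inr (.inr k)) * Bz x k) = 0) :
    ∑ i, x i * additiveField lam b1 bY bZ By Bz x i = 0 := by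
  calc ∑ i, x i * additiveField lam b1 bY bZ By Bz x i
      = ∑ k, (x (.inr (.inl k)) * By x k + x (.inr (.inr k)) * Bz x k)
        + ∑ k, lam * x (.inl ()) *
            ((b1 k + bY k + bZ k) * x (.inr (.inl k)) * x (.inr (.inr k))) := by
        simp only [Fintype.sum_sum_type, Fintype.sum_unique, additiveField, mul_sum,
          ← sum_add_distrib]
        exact sum_congr rfl fun k _ => by ring
    _ = 0 := by simp [hbath, htriad]

end AdditiveModel

theorem additive_model_gaussian_invariant_general
    (Λ : ℕ) (lam β Z : ℝ)
    (b1 bY bZ : Fin Λ → ℝ) (htriad : ∀ k, b1 k + bY k + bZ k = 0)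
    (By Bz : (AddIdx Λ → ℝ) → Fin Λ → ℝ)
    (hBd : ∀ k, Differentiable ℝ (fun x => By x k) ∧ Differentiable ℝ (fun x => Bz x k))
    (hbath : ∀ x : AddIdx Λ → ℝ,
      ∑ k, (x (.inr (.inl k)) * By x k + x (.inr (.inr k)) * Bz x k) = 0)
    (R : (AddIdx Λ → ℝ) → AddIdx Λ → ℝ)
    (hR : ∀ x : AddIdx Λ → ℝ,
      R x (.inl ()) = lam * ∑ k, b1 k * x (.inr (.inl k)) * x (.inr (.inr k))
      ∧ (∀ k, R x (.inr (.inl k)) = By x k + lam * bY k * x (.inl ()) * x (.inr (.inr k)))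
      ∧ (∀ k, R x (.inr (.inr k)) = Bz x k + lam * bZ k * x (.inl ()) * x (.inr (.inl k))))
    (hdivfree : ∀ (x : AddIdx Λ → ℝ) (i : AddIdx Λ),
      fderiv ℝ (fun y => R y i) x (Pi.single i 1) = 0)
    (f : (AddIdx Λ → ℝ) → ℝ)
    (hf : ∀ x, f x = Z⁻¹ * Real.exp (-β * ∑ i, x i ^ 2)) :
    ∀ x : AddIdx Λ → ℝ,
      ∑ i, fderiv ℝ (fun y => R y i * f y) x (Pi.single i 1) = 0 := by
  intro x
  obtain rfl := eq_additiveField hR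
  obtain rfl : f = fun y => Z⁻¹ * Real.exp (-β * ∑ i, y i ^ 2) := funext hf
  exact sum_fderiv_mul_gaussian_eq_zero
    (fun i => (differentiable_additiveField_apply hBd i).differentiableAt) (hdivfree x)
    (sum_mul_additiveField_eq_zero htriad (hbath x))

/-- Under the triad constraints `b_k^{1|yz} + b_k^{y|1z} + b_k^{z|1y} = 0` and the
divergence-free property of the full vector field `R` (each `R_i` does not depend on
`x_i`), together with energy conservation of the Burgers bath, the Gaussian density
`f(x) = Z⁻¹ exp(−β(x₁² + Σ_k(y_k² + z_k²)))` is invariant for the additive model: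
`div(R f) = 0`. -/
theorem additive_model_gaussian_invariant
    (Λ : ℕ) (lam β Z : ℝ) (hβ : 0 < β) (hZ : 0 < Z)
    (b1 bY bZ : Fin Λ → ℝ) (htriad : ∀ k, b1 k + bY k + bZ k = 0)
    (By Bz : (AddIdx Λ → ℝ) → Fin Λ → ℝ)
    (hBd : ∀ k, Differentiable ℝ (fun x => By x k) ∧ Differentiable ℝ (fun x => Bz x k))
    (hbath : ∀ x : AddIdx Λ → ℝ,
      ∑ k, (x (.inr (.inl k)) * By x k + x (.inr (.inr k)) * Bz x k) = 0)
    (R : (AddIdx Λ → ℝ) → AddIdx Λ → ℝ)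
    (hR : ∀ x : AddIdx Λ → ℝ,
      R x (.inl ()) = lam * ∑ k, b1 k * x (.inr (.inl k)) * x (.inr (.inr k))
      ∧ (∀ k, R x (.inr (.inl k)) = By x k + lam * bY k * x (.inl ()) * x (.inr (.inr k)))
      ∧ (∀ k, R x (.inr (.inr k)) = Bz x k + lam * bZ k * x (.inl ()) * x (.inr (.inl k))))
    (hdivfree : ∀ (x : AddIdx Λ → ℝ) (i : AddIdx Λ),
      fderiv ℝ (fun y => R y i) x (Pi.single i 1) = 0)
    (f : (AddIdx Λ → ℝ) → ℝ)
    (hf : ∀ x, f x = Z⁻¹ * Real.exp (-β * ∑ i, x i ^ 2)) :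
    ∀ x : AddIdx Λ → ℝ,
      ∑ i, fderiv ℝ (fun y => R y i * f y) x (Pi.single i 1) = 0 :=
  additive_model_gaussian_invariant_general Λ lam β Z b1 bY bZ htriad By Bz hBd hbath R hR hdivfree
    f hf
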